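/- arXiv:1609.08953 — 3 statements merged into one kernel-verified Lean document; each statement's English description precedes it below -/
import Mathlib

section
/- Let G be a finite graph with a 2-coloring c of its vertices, let U be the set of unstable vertices (those for which strictly more than half of their neighbors have the other color), and let p : V → [0,1]. Let S_1, S_2 denote the non-conflicting edges with exactly one, respectively two, unstable endpoints, and C_1, C_2 the conflicting edges with exactly one, respectively two, unstable endpoints (for edges in S_1 and C_1 write u for the unstable endpoint). Then Σ_{u∈U} p_u + Σ_{uv∈S_1} p_u + Σ_{uv∈S_2}(p_u + p_v) ≤ Σ_{uv∈C_1} p_u + Σ_{uv∈C_2}(p_u + p_v). -/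
/-!
At an unstable vertex the conflicting incident edges outnumber the non-conflicting ones by at
least one, whichever way both kinds are further split according to the stability of the other
endpoint. Multiplying this count inequality by `p u ≥ 0` and summing over the unstable vertices
gives the claim, since each edge sum is written as a sum over unstable vertices and their
neighbours.
-/

open Finset

namespace Finset

variable {α : Type*} (s : Finset α) (P Q : α → Prop) [DecidablePred P] [DecidablePred Q]

theorem card_filter_and_not_add_card_filter_and :
    #(s.filter fun a => P a ∧ ¬ Q a) + #(s.filter fun a => P a ∧ Q a) = #(s.filter P) := by
  rw [← filter_filter, ← filter_filter, add_comm, card_filter_add_card_filter_not]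

variable {s P}

theorem card_filter_add_one_le_of_card_lt (h : #s < 2 * #(s.filter fun a => ¬ P a)) :
    #(s.filter P) + 1 ≤ #(s.filter fun a => ¬ P a) := by
  have := card_filter_add_card_filter_not (s := s) P
  omega

end Finset

namespace SimpleGraph

variable {V α : Type*} [DecidableEq α] (G : SimpleGraph V) [G.LocallyFinite]
  {c : V → α} {u : V}

theorem one_add_card_sameColor_le_card_diffColor
    (hu : G.degree u < 2 * #((G.neighborFinset u).filter fun v => c v ≠ c u))
    (Q : V → Prop) [DecidablePred Q] :
    1 + #((G.neighborFinset u).filter fun v => c v = c u ∧ ¬ Q v)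
        + #((G.neighborFinset u).filter fun v => c v = c u ∧ Q v)
      ≤ #((G.neighborFinset u).filter fun v => c v ≠ c u ∧ ¬ Q v)
        + #((G.neighborFinset u).filter fun v => c v ≠ c u ∧ Q v) := by
  rw [← card_neighborFinset_eq_degree] at hu
  have hlt := card_filter_add_one_le_of_card_lt (P := (c · = c u)) hu
  have hsame := card_filter_and_not_add_card_filter_and (G.neighborFinset u) (c · = c u) Q
  have hdiff := card_filter_and_not_add_card_filter_and (G.neighborFinset u) (c · ≠ c u) Q
  simp only [ne_eq] at hdiff ⊢
  omega

end SimpleGraph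

/-- For a finite 2-colored graph with unstable vertices `U`
(strict majority of neighbors of the other color) and activation probabilities `p`,
the sum over non-conflicting edges of the probabilities of their unstable endpoints
plus `∑_{u ∈ U} p u` is at most the corresponding sum over conflicting edges.
Edge sums are written as sums over unstable vertices and their neighbors: an edge with
two unstable endpoints is thus counted from both sides, contributing `p u + p v`. -/
theorem stmt5 {V : Type*} [Fintype V] [DecidableEq V]
    (G : SimpleGraph V) [DecidableRel G.Adj]
    (c : V → Bool) (p : V → ℝ) (hp : ∀ u, 0 ≤ p u ∧ p u ≤ 1)
    (unstable : V → Prop) [DecidablePred unstable]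
    (hunstable : ∀ u, unstable u ↔
      G.degree u < 2 * ((G.neighborFinset u).filter (fun v => c v ≠ c u)).card)
    (U : Finset V) (hU : U = Finset.univ.filter unstable) :
    -- ∑_{u∈U} p_u + ∑_{uv∈S₁} p_u + ∑_{uv∈S₂} (p_u + p_v)
    (∑ u ∈ U, p u)
      + (∑ u ∈ U, ∑ v ∈ (G.neighborFinset u).filter (fun v => c v = c u ∧ ¬ unstable v), p u)
      + (∑ u ∈ U, ∑ v ∈ (G.neighborFinset u).filter (fun v => c v = c u ∧ unstable v), p u)
    ≤ -- ∑_{uv∈C₁} p_u + ∑_{uv∈C₂} (p_u + p_v)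
      (∑ u ∈ U, ∑ v ∈ (G.neighborFinset u).filter (fun v => c v ≠ c u ∧ ¬ unstable v), p u)
      + (∑ u ∈ U, ∑ v ∈ (G.neighborFinset u).filter (fun v => c v ≠ c u ∧ unstable v), p u) := by
  simp only [← sum_add_distrib]
  refine sum_le_sum fun u hu => ?_
  have hu : unstable u := by simpa [hU] using hu
  have hcard := G.one_add_card_sameColor_le_card_diffColor ((hunstable u).1 hu) unstable
  have hweighted := mul_le_mul_of_nonneg_right (Nat.cast_le (α := ℝ).2 hcard) (hp u).1
  simp only [sum_const, nsmul_eq_mul]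
  push_cast at hweighted
  linarith
end

section
/- Under the hypotheses of the preceding summation inequality, if the expected change of the number of conflicting edges in one step is E[ΔC] = Σ_{uv∈S_1} p_u + Σ_{uv∈S_2} p_{uv} - Σ_{uv∈C_1} p_u - Σ_{uv∈C_2} p_{uv} with p_{uv} = p_u + p_v - 2 p_u p_v, then E[ΔC] ≤ Σ_{uv∈C_2} 2 p_u p_v - Σ_{u∈U} p_u. -/
/-!
Write `S₁, S₂, C₁, C₂` for the same-coloured/conflicting edges at an unstable vertex whose other
endpoint is stable/unstable, and sum over ordered pairs. Since `p_{uv}` is symmetric, half the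
ordered-pair sum of `p_{uv}` over `S₂` is `∑ p_u − ∑ p_u p_v`, and likewise over `C₂`. Hence
`E[ΔC] = ∑_{S₁} p_u + ∑_{S₂} p_u − ∑_{C₁} p_u − ∑_{C₂} p_u − ∑_{S₂} p_u p_v + ∑_{C₂} p_u p_v`,
and the claim follows from the summed instability inequality
`∑_U p_u + ∑_{S₁} p_u + ∑_{S₂} p_u ≤ ∑_{C₁} p_u + ∑_{C₂} p_u` and `p_u p_v ≥ 0`.
-/

open Finset

theorem Finset.one_add_card_filter_le_card_filter_not {α : Type*} (s : Finset α)
    (q : α → Prop) [DecidablePred q] (h : #s < 2 * #(s.filter fun a ↦ ¬ q a)) :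
    1 + #(s.filter q) ≤ #(s.filter fun a ↦ ¬ q a) := by
  have := s.card_filter_add_card_filter_not q
  omega

theorem Finset.sum_filter_and_not_add_sum_filter_and {α M : Type*} [AddCommMonoid M]
    (s : Finset α) (q r : α → Prop) [DecidablePred q] [DecidablePred r] (f : α → M) :
    ∑ a ∈ s.filter (fun a ↦ q a ∧ ¬ r a), f a + ∑ a ∈ s.filter (fun a ↦ q a ∧ r a), f a
      = ∑ a ∈ s.filter q, f a := by
  rw [← filter_filter, ← filter_filter, add_comm, sum_filter_add_sum_filter_not]

namespace SimpleGraph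

variable {V : Type*} [Fintype V] (G : SimpleGraph V) [DecidableRel G.Adj]

theorem sum_sum_neighborFinset_filter_comm {M : Type*} [AddCommMonoid M]
    (P : V → Prop) [DecidablePred P] (R : V → V → Prop) [DecidableRel R]
    (hR : ∀ u v, R u v → R v u) (f : V → V → M) :
    ∑ u ∈ univ.filter P, ∑ v ∈ (G.neighborFinset u).filter (fun v ↦ R u v ∧ P v), f u v
      = ∑ u ∈ univ.filter P, ∑ v ∈ (G.neighborFinset u).filter (fun v ↦ R u v ∧ P v), f v u :=
  sum_comm' fun u v ↦ by
    simp only [mem_filter, mem_univ, true_and, mem_neighborFinset]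
    exact ⟨fun ⟨hu, huv, hr, hv⟩ ↦ ⟨⟨huv.symm, hR _ _ hr, hu⟩, hv⟩,
      fun ⟨⟨hvu, hr, hu⟩, hv⟩ ↦ ⟨hu, hvu.symm, hR _ _ hr, hv⟩⟩

theorem half_sum_sum_neighborFinset_filter_add_sub_two_mul
    (P : V → Prop) [DecidablePred P] (R : V → V → Prop) [DecidableRel R]
    (hR : ∀ u v, R u v → R v u) (p : V → ℝ) :
    1 / 2 * ∑ u ∈ univ.filter P, ∑ v ∈ (G.neighborFinset u).filter (fun v ↦ R u v ∧ P v),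
        (p u + p v - 2 * p u * p v)
      = ∑ u ∈ univ.filter P, ∑ v ∈ (G.neighborFinset u).filter (fun v ↦ R u v ∧ P v), p u
        - ∑ u ∈ univ.filter P, ∑ v ∈ (G.neighborFinset u).filter (fun v ↦ R u v ∧ P v),
            p u * p v := by
  simp only [sum_sub_distrib, sum_add_distrib, mul_assoc, ← mul_sum]
  rw [G.sum_sum_neighborFinset_filter_comm P R hR fun u v ↦ p v]
  ring

variable (c : V → Bool) (p : V → ℝ) (unstable : V → Prop) [DecidablePred unstable]

theorem add_sum_filter_same_le_sum_filter_conflict {u : V} (hpu : 0 ≤ p u)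
    (hu : G.degree u < 2 * ((G.neighborFinset u).filter (fun v ↦ c v ≠ c u)).card) :
    p u + ∑ v ∈ (G.neighborFinset u).filter (fun v ↦ c v = c u ∧ ¬ unstable v), p u
        + ∑ v ∈ (G.neighborFinset u).filter (fun v ↦ c v = c u ∧ unstable v), p u
      ≤ ∑ v ∈ (G.neighborFinset u).filter (fun v ↦ c v ≠ c u ∧ ¬ unstable v), p u
        + ∑ v ∈ (G.neighborFinset u).filter (fun v ↦ c v ≠ c u ∧ unstable v), p u := by
  rw [add_assoc, sum_filter_and_not_add_sum_filter_and, sum_filter_and_not_add_sum_filter_and]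
  have hcard := (G.neighborFinset u).one_add_card_filter_le_card_filter_not (c · = c u) hu
  simp only [sum_const, nsmul_eq_mul]
  calc p u + #((G.neighborFinset u).filter (c · = c u)) * p u
      = ((1 + #((G.neighborFinset u).filter (c · = c u)) : ℕ) : ℝ) * p u := by push_cast; ring
    _ ≤ #((G.neighborFinset u).filter (c · ≠ c u)) * p u := by gcongr

theorem sum_add_sum_sum_filter_same_le_sum_sum_filter_conflict (hp : ∀ u, 0 ≤ p u)
    (hunstable : ∀ u, unstable u ↔
      G.degree u < 2 * ((G.neighborFinset u).filter (fun v ↦ c v ≠ c u)).card) :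
    ∑ u ∈ univ.filter unstable, p u
        + ∑ u ∈ univ.filter unstable,
            ∑ v ∈ (G.neighborFinset u).filter (fun v ↦ c v = c u ∧ ¬ unstable v), p u
        + ∑ u ∈ univ.filter unstable,
            ∑ v ∈ (G.neighborFinset u).filter (fun v ↦ c v = c u ∧ unstable v), p u
      ≤ ∑ u ∈ univ.filter unstable,
            ∑ v ∈ (G.neighborFinset u).filter (fun v ↦ c v ≠ c u ∧ ¬ unstable v), p u
        + ∑ u ∈ univ.filter unstable,
            ∑ v ∈ (G.neighborFinset u).filter (fun v ↦ c v ≠ c u ∧ unstable v), p u := by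
  simp only [← sum_add_distrib]
  exact sum_le_sum fun u hu ↦ G.add_sum_filter_same_le_sum_filter_conflict c p unstable (hp u)
    ((hunstable u).1 (mem_filter.1 hu).2)

end SimpleGraph

theorem stmt6_general {V : Type*} [Fintype V]
    (G : SimpleGraph V) [DecidableRel G.Adj]
    (c : V → Bool) (p : V → ℝ) (hp : ∀ u, 0 ≤ p u ∧ p u ≤ 1)
    (unstable : V → Prop) [DecidablePred unstable]
    (hunstable : ∀ u, unstable u ↔
      G.degree u < 2 * ((G.neighborFinset u).filter (fun v => c v ≠ c u)).card)
    (U : Finset V) (hU : U = Finset.univ.filter unstable)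
    (EΔC : ℝ)
    (hEΔC : EΔC =
      (∑ u ∈ U, ∑ v ∈ (G.neighborFinset u).filter (fun v => c v = c u ∧ ¬ unstable v), p u)
      + (1 / 2) * (∑ u ∈ U, ∑ v ∈ (G.neighborFinset u).filter
          (fun v => c v = c u ∧ unstable v), (p u + p v - 2 * p u * p v))
      - (∑ u ∈ U, ∑ v ∈ (G.neighborFinset u).filter (fun v => c v ≠ c u ∧ ¬ unstable v), p u)
      - (1 / 2) * (∑ u ∈ U, ∑ v ∈ (G.neighborFinset u).filter
          (fun v => c v ≠ c u ∧ unstable v), (p u + p v - 2 * p u * p v))) :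
    EΔC ≤
      (∑ u ∈ U, ∑ v ∈ (G.neighborFinset u).filter (fun v => c v ≠ c u ∧ unstable v),
        p u * p v)
      - ∑ u ∈ U, p u := by
  have hp₀ u : 0 ≤ p u := (hp u).1
  subst hU hEΔC
  rw [G.half_sum_sum_neighborFinset_filter_add_sub_two_mul unstable (fun u v ↦ c v = c u)
      (fun _ _ h ↦ h.symm) p,
    G.half_sum_sum_neighborFinset_filter_add_sub_two_mul unstable (fun u v ↦ c v ≠ c u)
      (fun _ _ h ↦ Ne.symm h) p]
  have hinstability :=
    G.sum_add_sum_sum_filter_same_le_sum_sum_filter_conflict c p unstable hp₀ hunstable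
  have hsame_nonneg : 0 ≤ ∑ u ∈ univ.filter unstable,
      ∑ v ∈ (G.neighborFinset u).filter (fun v ↦ c v = c u ∧ unstable v), p u * p v :=
    sum_nonneg fun u _ ↦ sum_nonneg fun v _ ↦ mul_nonneg (hp₀ u) (hp₀ v)
  linarith

/-- In the same setting as the summation inequality (finite 2-colored
graph, unstable vertices `U`, activation probabilities `p : V → [0,1]`), the expected
change of the number of conflicting edges
`E[ΔC] = ∑_{uv∈S₁} p_u + ∑_{uv∈S₂} p_{uv} − ∑_{uv∈C₁} p_u − ∑_{uv∈C₂} p_{uv}`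
with `p_{uv} = p_u + p_v − 2 p_u p_v` satisfies
`E[ΔC] ≤ ∑_{uv∈C₂} 2 p_u p_v − ∑_{u∈U} p_u`.
Sums over edges with two unstable endpoints are written as half the corresponding sum
over ordered pairs (each such edge is seen from both endpoints);
in particular `∑_{uv∈C₂} 2 p_u p_v` is the ordered-pair sum of `p u * p v`. -/
theorem stmt6 {V : Type*} [Fintype V] [DecidableEq V]
    (G : SimpleGraph V) [DecidableRel G.Adj]
    (c : V → Bool) (p : V → ℝ) (hp : ∀ u, 0 ≤ p u ∧ p u ≤ 1)
    (unstable : V → Prop) [DecidablePred unstable]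
    (hunstable : ∀ u, unstable u ↔
      G.degree u < 2 * ((G.neighborFinset u).filter (fun v => c v ≠ c u)).card)
    (U : Finset V) (hU : U = Finset.univ.filter unstable)
    (EΔC : ℝ)
    (hEΔC : EΔC =
      (∑ u ∈ U, ∑ v ∈ (G.neighborFinset u).filter (fun v => c v = c u ∧ ¬ unstable v), p u)
      + (1 / 2) * (∑ u ∈ U, ∑ v ∈ (G.neighborFinset u).filter
          (fun v => c v = c u ∧ unstable v), (p u + p v - 2 * p u * p v))
      - (∑ u ∈ U, ∑ v ∈ (G.neighborFinset u).filter (fun v => c v ≠ c u ∧ ¬ unstable v), p u)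
      - (1 / 2) * (∑ u ∈ U, ∑ v ∈ (G.neighborFinset u).filter
          (fun v => c v ≠ c u ∧ unstable v), (p u + p v - 2 * p u * p v))) :
    EΔC ≤
      (∑ u ∈ U, ∑ v ∈ (G.neighborFinset u).filter (fun v => c v ≠ c u ∧ unstable v),
        p u * p v)
      - ∑ u ∈ U, p u :=
  stmt6_general G c p hp unstable hunstable U hU EΔC hEΔC
end

section
/- Let G be a finite graph with 2-coloring, U the set of unstable vertices (nonempty), C_2 the set of conflicting edges with both endpoints unstable, and p : V → [0,1] with p_u ≥ p/Δ and p_u ≤ q/Δ_u for all u, where Δ is the maximum degree, Δ_u = max over neighbors v of u of deg(v), and p, q ∈ (0,1). Then Σ_{u∈U} p_u (−1 + Σ_{v : uv∈C_2} p_v) ≤ −p(1−q)|U|/Δ. -/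
/-!
Each summand is bounded on its own: a neighbour `v` of `u` has `Δ_v ≥ deg u`, so the at most
`deg u` weights `p_v` at `u` add up to at most `q`, whence
`p_u (−1 + ∑ p_v) ≤ −p_u (1 − q) ≤ −p (1 − q) / Δ`.
-/

open Finset

namespace SimpleGraph

variable {V : Type*} (G : SimpleGraph V) [∀ v, Fintype (G.neighborSet v)]

/-- The paper's `Δ_u`. -/
def maxNeighborDegree (u : V) : ℕ :=
  (G.neighborFinset u).sup fun v => G.degree v

theorem degree_le_maxNeighborDegree_of_adj {u v : V} (h : G.Adj u v) :
    G.degree u ≤ G.maxNeighborDegree v :=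
  le_sup (f := fun w => G.degree w) ((G.mem_neighborFinset v u).mpr h.symm)

theorem sum_filter_neighborFinset_le {f : V → ℝ} {q : ℝ} (hq : 0 ≤ q)
    (hf : ∀ v, f v ≤ q / G.maxNeighborDegree v) (u : V) (P : V → Prop) [DecidablePred P] :
    ∑ v ∈ (G.neighborFinset u).filter P, f v ≤ q := by
  obtain hdeg | hdeg := (G.degree u).eq_zero_or_pos
  · have hempty : G.neighborFinset u = ∅ := by
      rw [← card_eq_zero, card_neighborFinset_eq_degree, hdeg]
    simp [hempty, hq]
  have hdeg' : (0 : ℝ) < G.degree u := by exact_mod_cast hdeg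
  have hterm : ∀ v ∈ (G.neighborFinset u).filter P, f v ≤ q / G.degree u := fun v hv =>
    (hf v).trans <| div_le_div_of_nonneg_left hq hdeg' <| by
      exact_mod_cast G.degree_le_maxNeighborDegree_of_adj
        ((G.mem_neighborFinset u v).mp (mem_filter.mp hv).1)
  have hcard : (((G.neighborFinset u).filter P).card : ℝ) ≤ G.degree u := by
    exact_mod_cast G.card_neighborFinset_eq_degree u ▸ card_filter_le _ _
  calc ∑ v ∈ (G.neighborFinset u).filter P, f v
      ≤ ((G.neighborFinset u).filter P).card * (q / G.degree u) := by
        simpa using sum_le_sum hterm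
    _ ≤ G.degree u * (q / G.degree u) := by gcongr
    _ = q := mul_div_cancel₀ q hdeg'.ne'

end SimpleGraph

theorem stmt7_general {V : Type*} [Fintype V]
    (G : SimpleGraph V) [DecidableRel G.Adj]
    (c : V → Bool)
    (unstable : V → Prop) [DecidablePred unstable]
    (U : Finset V)
    (p q : ℝ) (hq : q ∈ Set.Ioo (0 : ℝ) 1)
    (pr : V → ℝ) (hpr : ∀ u, pr u ∈ Set.Icc (0 : ℝ) 1)
    (hlow : ∀ u, p / (G.maxDegree : ℝ) ≤ pr u)
    (hhigh : ∀ u, pr u ≤ q / (((G.neighborFinset u).sup fun v => G.degree v : ℕ) : ℝ)) :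
    ∑ u ∈ U, pr u * (-1 + ∑ v ∈ (G.neighborFinset u).filter
        (fun v => c v ≠ c u ∧ unstable v), pr v)
      ≤ -(p * (1 - q) * (U.card : ℝ) / (G.maxDegree : ℝ)) := by
  have hpoint : ∀ u ∈ U, pr u * (-1 + ∑ v ∈ (G.neighborFinset u).filter
      (fun v => c v ≠ c u ∧ unstable v), pr v) ≤ -(p * (1 - q) / G.maxDegree) := by
    intro u _
    have hS := G.sum_filter_neighborFinset_le hq.1.le hhigh u (fun v => c v ≠ c u ∧ unstable v)
    have hslack : 0 ≤ 1 - q := by linarith [hq.2]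
    calc _ ≤ pr u * (-(1 - q)) := mul_le_mul_of_nonneg_left (by linarith) (hpr u).1
      _ ≤ p / G.maxDegree * (-(1 - q)) := by nlinarith [hlow u]
      _ = -(p * (1 - q) / G.maxDegree) := by ring
  calc _ ≤ ∑ _u ∈ U, -(p * (1 - q) / G.maxDegree) := sum_le_sum hpoint
    _ = _ := by rw [sum_const, nsmul_eq_mul]; ring

/-- Finite 2-colored graph, `U` the (nonempty) set of unstable vertices,
`p_u ∈ [p/Δ, q/Δ_u]` with `Δ` the maximum degree and `Δ_u` the maximum degree among
the neighbors of `u`, and `p, q ∈ (0,1)`. Then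
`∑_{u∈U} p_u (−1 + ∑_{v : uv ∈ C₂} p_v) ≤ −p(1−q)|U|/Δ`,
where `C₂` is the set of conflicting edges with both endpoints unstable. -/
theorem stmt7 {V : Type*} [Fintype V] [DecidableEq V]
    (G : SimpleGraph V) [DecidableRel G.Adj]
    (c : V → Bool)
    (unstable : V → Prop) [DecidablePred unstable]
    (hunstable : ∀ u, unstable u ↔
      G.degree u < 2 * ((G.neighborFinset u).filter (fun v => c v ≠ c u)).card)
    (U : Finset V) (hU : U = Finset.univ.filter unstable) (hUne : U.Nonempty)
    (p q : ℝ) (hp : p ∈ Set.Ioo (0 : ℝ) 1) (hq : q ∈ Set.Ioo (0 : ℝ) 1)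
    (pr : V → ℝ) (hpr : ∀ u, pr u ∈ Set.Icc (0 : ℝ) 1)
    (hlow : ∀ u, p / (G.maxDegree : ℝ) ≤ pr u)
    (hhigh : ∀ u, pr u ≤ q / (((G.neighborFinset u).sup fun v => G.degree v : ℕ) : ℝ)) :
    ∑ u ∈ U, pr u * (-1 + ∑ v ∈ (G.neighborFinset u).filter
        (fun v => c v ≠ c u ∧ unstable v), pr v)
      ≤ -(p * (1 - q) * (U.card : ℝ) / (G.maxDegree : ℝ)) :=
  stmt7_general G c unstable U p q hq pr hpr hlow hhigh
end
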